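/- arXiv:2412.13269 — 4 statements merged into one kernel-verified Lean document; each statement's English description precedes it below -/
import Mathlib

section
/- Let N be a power of two, Q a positive integer, and R = (ZMod Q)[X]/(X^N + 1). For every odd integer i, the substitution X ↦ X^i induces a well-defined ring automorphism φ_i of R; moreover φ_i depends only on i modulo 2N, and for all odd integers i, j one has φ_i ∘ φ_j = φ_{i·j}. -/
open Polynomial AdjoinRoot

noncomputable section

/-- The negacyclic ring `(ZMod Q)[X]/(X^N + 1)`. -/
abbrev Rq (Q N : ℕ) := AdjoinRoot (X ^ N + 1 : (ZMod Q)[X])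

lemma monicXN (Q N : ℕ) (hN : 0 < N) : (X ^ N + 1 : (ZMod Q)[X]).Monic :=
  Polynomial.monic_X_pow_add (lt_of_le_of_lt Polynomial.degree_one_le (by exact_mod_cast hN))

/-- The `k`-th coefficient of the unique degree `< N` representative of `m`. -/
def coeffOf {Q N : ℕ} (hN : 0 < N) (m : Rq Q N) (k : ℕ) : ZMod Q :=
  ((AdjoinRoot.modByMonicHom (monicXN Q N hN)) m).coeff k

lemma root_pow_eq_neg_one (Q N : ℕ) :
    (root (X ^ N + 1 : (ZMod Q)[X])) ^ N = -1 := by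
  have h : (Polynomial.aeval (root (X ^ N + 1 : (ZMod Q)[X]))) (X ^ N + 1 : (ZMod Q)[X]) = 0 := by
    rw [AdjoinRoot.aeval_eq, AdjoinRoot.mk_self]
  simp only [map_add, map_pow, Polynomial.aeval_X, map_one] at h
  linear_combination h

lemma aeval_root_pow_odd (Q N : ℕ) {g : ℕ} (hg : Odd g) :
    (Polynomial.aeval ((root (X ^ N + 1 : (ZMod Q)[X])) ^ g)) (X ^ N + 1 : (ZMod Q)[X]) = 0 := by
  have h : ((root (X ^ N + 1 : (ZMod Q)[X])) ^ g) ^ N = -1 := by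
    rw [← pow_mul, mul_comm, pow_mul, root_pow_eq_neg_one, Odd.neg_one_pow hg]
  simp only [map_add, map_pow, Polynomial.aeval_X, map_one, h]
  ring

/-- The automorphism `φ_g : X ↦ X^g` of `(ZMod Q)[X]/(X^N+1)`, for `g` odd. -/
def phi (Q N : ℕ) (g : ℕ) (hg : Odd g) : Rq Q N →ₐ[ZMod Q] Rq Q N :=
  AdjoinRoot.liftAlgHom _ (Algebra.ofId (ZMod Q) (Rq Q N)) ((root (X ^ N + 1 : (ZMod Q)[X])) ^ g) (aeval_root_pow_odd Q N hg)

end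

/-!
Since `X^N = -1` in `R`, the class of `X` has order dividing `2N`, so `φ_i` only sees `i mod 2N`
and `φ_i ∘ φ_j` sends `X` to `X^(ij)`. When `N` is a power of two, an odd `i` is a unit modulo
`2N` (by Euler's theorem its inverse is a power of `i`, hence odd), and `φ_j` for that inverse `j`
inverts `φ_i`.
-/

section Substitution

variable (Q N : ℕ)

lemma phi_root (i : ℕ) (hi : Odd i) :
    phi Q N i hi (root (X ^ N + 1 : (ZMod Q)[X])) = root (X ^ N + 1 : (ZMod Q)[X]) ^ i :=
  liftAlgHom_root _ _ _ _

lemma root_pow_two_mul_self : root (X ^ N + 1 : (ZMod Q)[X]) ^ (2 * N) = 1 := by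
  rw [mul_comm, pow_mul, root_pow_eq_neg_one, neg_one_sq]

lemma phi_eq_of_modEq {i j : ℕ} (hi : Odd i) (hj : Odd j) (h : i ≡ j [MOD 2 * N]) :
    phi Q N i hi = phi Q N j hj := by
  apply AdjoinRoot.algHom_ext
  rw [phi_root, phi_root, pow_eq_pow_mod i (root_pow_two_mul_self Q N),
    pow_eq_pow_mod j (root_pow_two_mul_self Q N), h]

lemma phi_comp_phi {i j : ℕ} (hi : Odd i) (hj : Odd j) :
    (phi Q N i hi).comp (phi Q N j hj) = phi Q N (i * j) (hi.mul hj) := by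
  apply AdjoinRoot.algHom_ext
  rw [AlgHom.comp_apply, phi_root, phi_root, map_pow, phi_root, ← pow_mul, mul_comm]

lemma phi_one : phi Q N 1 odd_one = AlgHom.id (ZMod Q) (Rq Q N) := by
  apply AdjoinRoot.algHom_ext
  rw [phi_root, pow_one, AlgHom.id_apply]

noncomputable def phiEquiv {i j : ℕ} (hi : Odd i) (hj : Odd j) (hij : i * j ≡ 1 [MOD 2 * N]) :
    Rq Q N ≃ₐ[ZMod Q] Rq Q N :=
  AlgEquiv.ofAlgHom (phi Q N i hi) (phi Q N j hj)
    (by rw [phi_comp_phi, phi_eq_of_modEq Q N _ odd_one hij, phi_one])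
    (by rw [phi_comp_phi, phi_eq_of_modEq Q N _ odd_one (mul_comm i j ▸ hij), phi_one])

end Substitution

lemma Odd.exists_odd_mul_modEq_one_two_pow {i : ℕ} (hi : Odd i) (n : ℕ) :
    ∃ j, Odd j ∧ i * j ≡ 1 [MOD 2 ^ n] := by
  have htot : 0 < (2 ^ n).totient := Nat.totient_pos.2 (by positivity)
  refine ⟨i ^ ((2 ^ n).totient - 1), hi.pow, ?_⟩
  rw [← pow_succ', Nat.sub_add_cancel htot]
  exact Nat.ModEq.pow_totient ((Nat.coprime_two_right.2 hi).pow_right n)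

theorem substitution_automorphisms_general (N Q : ℕ) (hNpow : ∃ k, N = 2 ^ k) :
    ∃ Φ : ∀ i : ℕ, Odd i → (Rq Q N ≃+* Rq Q N),
      (∀ (i : ℕ) (hi : Odd i),
        Φ i hi (root (X ^ N + 1 : (ZMod Q)[X])) = (root (X ^ N + 1 : (ZMod Q)[X])) ^ i) ∧
      (∀ (i j : ℕ) (hi : Odd i) (hj : Odd j),
        i % (2 * N) = j % (2 * N) → Φ i hi = Φ j hj) ∧
      (∀ (i j : ℕ) (hi : Odd i) (hj : Odd j) (x : Rq Q N),
        Φ i hi (Φ j hj x) = Φ (i * j) (hi.mul hj) x) := by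
  obtain ⟨k, rfl⟩ := hNpow
  choose inv hinv_odd hinv using fun (i : ℕ) (hi : Odd i) =>
    hi.exists_odd_mul_modEq_one_two_pow (k + 1)
  refine ⟨fun i hi =>
      (phiEquiv Q (2 ^ k) hi (hinv_odd i hi) (pow_succ' 2 k ▸ hinv i hi)).toRingEquiv,
    fun i hi => phi_root Q _ i hi, fun i j hi hj h => ?_, fun i j hi hj x => ?_⟩
  · exact RingEquiv.ext fun x => DFunLike.congr_fun (phi_eq_of_modEq Q _ hi hj h) x
  · exact DFunLike.congr_fun (phi_comp_phi Q _ hi hj) x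

/-- For every odd `i`, the substitution `X ↦ X^i` induces a well-defined ring automorphism
`φ_i` of `(ZMod Q)[X]/(X^N+1)`; moreover `φ_i` depends only on `i` modulo `2N`, and
`φ_i ∘ φ_j = φ_{i·j}`. -/
theorem substitution_automorphisms (N Q : ℕ) (hNpow : ∃ k, N = 2 ^ k) (hQ : 0 < Q) :
    ∃ Φ : ∀ i : ℕ, Odd i → (Rq Q N ≃+* Rq Q N),
      (∀ (i : ℕ) (hi : Odd i),
        Φ i hi (root (X ^ N + 1 : (ZMod Q)[X])) = (root (X ^ N + 1 : (ZMod Q)[X])) ^ i) ∧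
      (∀ (i j : ℕ) (hi : Odd i) (hj : Odd j),
        i % (2 * N) = j % (2 * N) → Φ i hi = Φ j hj) ∧
      (∀ (i j : ℕ) (hi : Odd i) (hj : Odd j) (x : Rq Q N),
        Φ i hi (Φ j hj x) = Φ (i * j) (hi.mul hj) x) :=
  substitution_automorphisms_general N Q hNpow
end

section
/- Let N ≥ 2 be a power of two, Q a positive integer, R_{N/2} = (ZMod Q)[X]/(X^{N/2} + 1), R_N = (ZMod Q)[X]/(X^N + 1), and ι : R_{N/2} → R_N the ring homomorphism induced by X ↦ X². Suppose s ∈ R_{N/2} and C₀, C₁, M ∈ R_N satisfy C₀ + C₁·ι(s) = M, and write the unique even/odd decompositions C₀ = ι(c₀ᵉ) + X·ι(c₀ᵒ), C₁ = ι(c₁ᵉ) + X·ι(c₁ᵒ), M = ι(mᵉ) + X·ι(mᵒ) with c₀ᵉ, c₀ᵒ, c₁ᵉ, c₁ᵒ, mᵉ, mᵒ ∈ R_{N/2}. Then c₀ᵉ + c₁ᵉ·s = mᵉ and c₀ᵒ + c₁ᵒ·s = mᵒ in R_{N/2}. -/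
open Polynomial AdjoinRoot

/-!
Write `a = mk f p` and `b = mk f q` with `deg p, deg q < deg f`. Since `ι` substitutes `X²` for
`X`, the element `ι a + X · ι b` is the class of `p(X²) + X q(X²)` modulo `f(X²)`. This polynomial
has the coefficients of `p` in its even and those of `q` in its odd degrees, so its degree is
below `deg f(X²) = 2 deg f`; being divisible by the monic `f(X²)`, it is zero, whence `p = q = 0`.
-/

namespace Polynomial

variable {R : Type*} [CommSemiring R] (p q : R[X])

theorem coeff_expand_two_add_X_mul_expand_two_two_mul (i : ℕ) :
    (expand R 2 p + X * expand R 2 q).coeff (2 * i) = p.coeff i := by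
  rcases i with _ | i
  · simpa using coeff_expand_mul' two_pos p 0
  · rw [coeff_add, coeff_expand_mul' two_pos, show 2 * (i + 1) = (2 * i + 1) + 1 by ring,
      coeff_X_mul, coeff_expand two_pos, if_neg (by omega), add_zero]

theorem coeff_expand_two_add_X_mul_expand_two_two_mul_add_one (i : ℕ) :
    (expand R 2 p + X * expand R 2 q).coeff (2 * i + 1) = q.coeff i := by
  rw [coeff_add, coeff_X_mul, coeff_expand_mul' two_pos, coeff_expand two_pos, if_neg (by omega),
    zero_add]

theorem eq_zero_and_eq_zero_of_expand_two_add_X_mul_expand_two_eq_zero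
    (h : expand R 2 p + X * expand R 2 q = 0) : p = 0 ∧ q = 0 := by
  constructor <;> ext i
  · simpa [h] using (coeff_expand_two_add_X_mul_expand_two_two_mul p q i).symm
  · simpa [h] using (coeff_expand_two_add_X_mul_expand_two_two_mul_add_one p q i).symm

theorem degree_expand_two_add_X_mul_expand_two_lt {n : ℕ} (hp : p.degree < n)
    (hq : q.degree < n) : (expand R 2 p + X * expand R 2 q).degree < ↑(2 * n) := by
  rw [degree_lt_iff_coeff_zero] at hp hq ⊢
  intro m hm
  obtain ⟨i, rfl | rfl⟩ := Nat.even_or_odd' m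
  · rw [coeff_expand_two_add_X_mul_expand_two_two_mul]
    exact hp i (by omega)
  · rw [coeff_expand_two_add_X_mul_expand_two_two_mul_add_one]
    exact hq i (by omega)

end Polynomial

def RingHom.toZModAlgHom {n : ℕ} {A B : Type*} [Ring A] [Ring B] [Algebra (ZMod n) A]
    [Algebra (ZMod n) B] (f : A →+* B) : A →ₐ[ZMod n] B :=
  { f with
    commutes' := RingHom.congr_fun (RingHom.ext_zmod (f.comp (algebraMap _ A)) (algebraMap _ B)) }

namespace AdjoinRoot

variable {R : Type*} [CommRing R] {f F : R[X]}

theorem algHom_mk_eq_mk_expand {k : ℕ} (ι : AdjoinRoot f →ₐ[R] AdjoinRoot F)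
    (hι : ι (root f) = root F ^ k) (p : R[X]) : ι (mk f p) = mk F (expand R k p) := by
  rw [← aeval_eq, ← aeval_eq, ← aeval_algHom_apply, hι, expand_aeval]

theorem exists_degree_lt_mk_eq [Nontrivial R] (hf : f.Monic) (a : AdjoinRoot f) :
    ∃ p : R[X], p.degree < f.degree ∧ mk f p = a := by
  refine ⟨modByMonicHom hf a, ?_, mk_leftInverse hf a⟩
  obtain ⟨p, rfl⟩ := mk_surjective a
  exact modByMonicHom_mk hf p ▸ degree_modByMonic_lt p hf

theorem eq_zero_and_eq_zero_of_add_root_mul_eq_zero (hf : f.Monic) (hF : expand R 2 f = F)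
    (ι : AdjoinRoot f →ₐ[R] AdjoinRoot F) (hι : ι (root f) = root F ^ 2) {a b : AdjoinRoot f}
    (h : ι a + root F * ι b = 0) : a = 0 ∧ b = 0 := by
  nontriviality R using Module.subsingleton R (AdjoinRoot f)
  obtain ⟨p, hp, rfl⟩ := exists_degree_lt_mk_eq hf a
  obtain ⟨q, hq, rfl⟩ := exists_degree_lt_mk_eq hf b
  rw [degree_eq_natDegree hf.ne_zero] at hp hq
  have hFm : F.Monic := hF ▸ hf.expand two_pos
  have hdeg : (expand R 2 p + X * expand R 2 q).degree < F.degree := by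
    rw [degree_eq_natDegree hFm.ne_zero, ← hF, natDegree_expand, Nat.mul_comm]
    exact degree_expand_two_add_X_mul_expand_two_lt p q hp hq
  have hmk : mk F (expand R 2 p + X * expand R 2 q) = 0 := by
    rwa [map_add, map_mul, mk_X, ← algHom_mk_eq_mk_expand ι hι, ← algHom_mk_eq_mk_expand ι hι]
  have hzero : expand R 2 p + X * expand R 2 q = 0 := by
    by_contra h0
    exact mk_ne_zero_of_degree_lt hFm h0 hdeg hmk
  obtain ⟨rfl, rfl⟩ := eq_zero_and_eq_zero_of_expand_two_add_X_mul_expand_two_eq_zero p q hzero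
  simp

theorem eq_and_eq_of_add_root_mul_eq_add_root_mul (hf : f.Monic) (hF : expand R 2 f = F)
    (ι : AdjoinRoot f →ₐ[R] AdjoinRoot F) (hι : ι (root f) = root F ^ 2)
    {a b a' b' : AdjoinRoot f} (h : ι a + root F * ι b = ι a' + root F * ι b') :
    a = a' ∧ b = b' := by
  have := eq_zero_and_eq_zero_of_add_root_mul_eq_zero hf hF ι hι (a := a - a') (b := b - b')
    (by rw [map_sub, map_sub]; linear_combination h)
  simpa only [sub_eq_zero] using this

end AdjoinRoot

theorem ring_splitting_exact_general (k N Q : ℕ) (hk : 1 ≤ k) (hN : N = 2 ^ k)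
    (ι : Rq Q (N / 2) →+* Rq Q N)
    (hι : ι (root (X ^ (N / 2) + 1 : (ZMod Q)[X])) = (root (X ^ N + 1 : (ZMod Q)[X])) ^ 2)
    (s c₀e c₀o c₁e c₁o me mo : Rq Q (N / 2)) (C₀ C₁ M : Rq Q N)
    (hC : C₀ + C₁ * ι s = M)
    (hC₀ : C₀ = ι c₀e + root (X ^ N + 1 : (ZMod Q)[X]) * ι c₀o)
    (hC₁ : C₁ = ι c₁e + root (X ^ N + 1 : (ZMod Q)[X]) * ι c₁o)
    (hM : M = ι me + root (X ^ N + 1 : (ZMod Q)[X]) * ι mo) :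
    c₀e + c₁e * s = me ∧ c₀o + c₁o * s = mo := by
  have hN2 : 2 * (N / 2) = N := Nat.mul_div_cancel' (hN ▸ dvd_pow_self 2 (by omega))
  have hn : 0 < N / 2 := Nat.div_pos (hN ▸ Nat.le_self_pow (by omega) 2) two_pos
  have hexpand : expand (ZMod Q) 2 (X ^ (N / 2) + 1) = X ^ N + 1 := by
    rw [map_add, map_pow, expand_X, map_one, ← pow_mul, hN2]
  refine AdjoinRoot.eq_and_eq_of_add_root_mul_eq_add_root_mul (monicXN Q (N / 2) hn) hexpand
    ι.toZModAlgHom hι ?_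
  change ι _ + _ * ι _ = ι _ + _ * ι _
  rw [map_add, map_add, map_mul, map_mul, ← hM, ← hC, hC₀, hC₁]
  ring

/-- Exact correctness of ring splitting: a dimension-`N` RLWE ciphertext `(C₀, C₁)`
encrypting `M` under `ι s = s(X²)` splits, via the even/odd decompositions
`C = ι(cᵉ) + X·ι(cᵒ)`, into two dimension-`N/2` ciphertexts encrypting the even and
odd parts of `M` under `s`. -/
theorem ring_splitting_exact (k N Q : ℕ) (hk : 1 ≤ k) (hN : N = 2 ^ k) (hQ : 0 < Q)
    (ι : Rq Q (N / 2) →+* Rq Q N)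
    (hι : ι (root (X ^ (N / 2) + 1 : (ZMod Q)[X])) = (root (X ^ N + 1 : (ZMod Q)[X])) ^ 2)
    (s c₀e c₀o c₁e c₁o me mo : Rq Q (N / 2)) (C₀ C₁ M : Rq Q N)
    (hC : C₀ + C₁ * ι s = M)
    (hC₀ : C₀ = ι c₀e + root (X ^ N + 1 : (ZMod Q)[X]) * ι c₀o)
    (hC₁ : C₁ = ι c₁e + root (X ^ N + 1 : (ZMod Q)[X]) * ι c₁o)
    (hM : M = ι me + root (X ^ N + 1 : (ZMod Q)[X]) * ι mo) :
    c₀e + c₁e * s = me ∧ c₀o + c₁o * s = mo :=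
  ring_splitting_exact_general k N Q hk hN ι hι s c₀e c₀o c₁e c₁o me mo C₀ C₁ M hC hC₀ hC₁ hM
end

section
/- Let R = (ZMod M)[X]/(X^N + 1) for N a power of two and M a positive integer, and let P be an integer. Let s, s' ∈ R, let w₀, …, w_{β−1} be integers (the decomposition basis), and for each 0 ≤ i < β let the key-switching key component be the pair (b_i, a_i) with b_i = −a_i·s' + e_i + (w_i·P)·s for some a_i, e_i ∈ R. Suppose d ∈ R decomposes as d = Σ_{i=0}^{β−1} w_i·d_i with d_i ∈ R. Then c₀ := Σ_i d_i·b_i and c₁ := Σ_i d_i·a_i satisfy c₀ + c₁·s' = P·d·s + Σ_{i=0}^{β−1} d_i·e_i in R. -/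
open Polynomial AdjoinRoot

section KeySwitching

variable {R ι : Type*} [CommRing R]

theorem key_switch_summand_decrypt (P w s s' a e d b : R)
    (hb : b = -(a * s') + e + w * P * s) :
    d * b + d * a * s' = P * (w * d) * s + d * e := by
  rw [hb]
  ring

theorem key_switch_decrypt (t : Finset ι) (P : R) (w : ι → R) (s s' : R) (a e dvec b : ι → R)
    (hb : ∀ i ∈ t, b i = -(a i * s') + e i + w i * P * s) :
    (∑ i ∈ t, dvec i * b i) + (∑ i ∈ t, dvec i * a i) * s' =
      P * (∑ i ∈ t, w i * dvec i) * s + ∑ i ∈ t, dvec i * e i := by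
  simp only [Finset.sum_mul, Finset.mul_sum, ← Finset.sum_add_distrib]
  exact Finset.sum_congr rfl fun i hi =>
    key_switch_summand_decrypt P (w i) s s' (a i) (e i) (dvec i) (b i) (hb i hi)

end KeySwitching

theorem switch_key_identity_general (N M : ℕ)
    (P : ℤ) (β : ℕ) (w : Fin β → ℤ)
    (s s' : Rq M N) (a e dvec b : Fin β → Rq M N)
    (hb : ∀ i, b i = -(a i * s') + e i + ((w i * P : ℤ) : Rq M N) * s)
    (d : Rq M N) (hd : d = ∑ i, ((w i : ℤ) : Rq M N) * dvec i) :
    (∑ i, dvec i * b i) + (∑ i, dvec i * a i) * s' =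
      (P : Rq M N) * d * s + ∑ i, dvec i * e i := by
  subst hd
  exact key_switch_decrypt Finset.univ (P : Rq M N) (fun i => (w i : Rq M N)) s s' a e dvec b
    fun i _ => by rw [hb, Int.cast_mul]

/-- The exact algebraic identity underlying the correctness of the `SwitchKey`
operation: if each key-switching key component satisfies
`b_i = −a_i·s' + e_i + (w_i·P)·s` and `d = Σ w_i·d_i`, then the switched ciphertext
`(Σ d_i·b_i, Σ d_i·a_i)` decrypts under `s'` to `P·d·s + Σ d_i·e_i`. -/
theorem switch_key_identity (N M : ℕ) (hNpow : ∃ a, N = 2 ^ a) (hM : 0 < M)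
    (P : ℤ) (β : ℕ) (w : Fin β → ℤ)
    (s s' : Rq M N) (a e dvec b : Fin β → Rq M N)
    (hb : ∀ i, b i = -(a i * s') + e i + ((w i * P : ℤ) : Rq M N) * s)
    (d : Rq M N) (hd : d = ∑ i, ((w i : ℤ) : Rq M N) * dvec i) :
    (∑ i, dvec i * b i) + (∑ i, dvec i * a i) * s' =
      (P : Rq M N) * d * s + ∑ i, dvec i * e i :=
  switch_key_identity_general N M P β w s s' a e dvec b hb d hd
end

section
/- Let N be a power of two, Q a positive integer, and R = (ZMod Q)[X]/(X^N + 1). Given functions f_0, …, f_{m−1} : Fin N → ZMod Q, define u_{f_j} = f_j(0) − Σ_{i=1}^{N−1} f_j(N−i)·X^i ∈ R. Then for all inputs k_0, …, k_{m−1} ∈ Fin N, the constant coefficient of Σ_{j=0}^{m−1} X^{k_j} · u_{f_j} equals Σ_{j=0}^{m−1} f_j(k_j). -/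
open Polynomial AdjoinRoot
open Fin.NatCast

noncomputable section

/-!
Multiplying by `X^k` rotates the coefficients of `u_f` negacyclically, since `X^N = -1`.
For `0 < k < N` the constant coefficient of `X^k · u_f` therefore comes only from the term
`-f(N - i) X^i` with `i = N - k`, which `X^k` turns into `-f(k) X^N = f(k)`; for `k = 0` it
is `f(0)`. The constant coefficient is linear, so the scores of the `m` attributes add up.
-/

section Negacyclic

variable {Q N : ℕ} (hN : 0 < N)

local notation "ρ" => root (X ^ N + 1 : (ZMod Q)[X])

def coeffOfLinearMap (k : ℕ) : Rq Q N →ₗ[ZMod Q] ZMod Q :=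
  (lcoeff (ZMod Q) k).comp (modByMonicHom (monicXN Q N hN))

lemma coeffOfLinearMap_apply (k : ℕ) (x : Rq Q N) :
    coeffOfLinearMap hN k x = coeffOf hN x k :=
  rfl

lemma coeffOf_root_pow_of_lt {e : ℕ} (he : e < N) (k : ℕ) :
    coeffOf hN (ρ ^ e) k = if k = e then 1 else 0 := by
  nontriviality ZMod Q
  have hdeg : (X ^ e : (ZMod Q)[X]).degree < (X ^ N + 1 : (ZMod Q)[X]).degree := by
    rw [degree_X_pow, ← C_1, degree_X_pow_add_C hN]
    exact_mod_cast he
  rw [coeffOf, ← mk_X, ← map_pow, modByMonicHom_mk,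
    (modByMonic_eq_self_iff (monicXN Q N hN)).2 hdeg, coeff_X_pow]

lemma coeffOf_root_pow_zero_of_lt_two_mul {e : ℕ} (he : e < 2 * N) :
    coeffOf hN (ρ ^ e) 0 = if e = 0 then 1 else if e = N then -1 else 0 := by
  rcases lt_or_ge e N with he' | he'
  · rw [coeffOf_root_pow_of_lt hN he', if_neg he'.ne]
    exact if_congr eq_comm rfl rfl
  · obtain ⟨d, rfl⟩ := Nat.exists_eq_add_of_le he'
    rw [pow_add, root_pow_eq_neg_one, neg_one_mul, ← coeffOfLinearMap_apply, map_neg,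
      coeffOfLinearMap_apply, coeffOf_root_pow_of_lt hN (by omega)]
    by_cases hd : d = 0 <;> simp [hd, eq_comm (a := 0), hN.ne']

def testVector [NeZero N] (f : Fin N → ZMod Q) : Rq Q N :=
  algebraMap (ZMod Q) (Rq Q N) (f 0) -
    ∑ i ∈ Finset.Ico 1 N,
      algebraMap (ZMod Q) (Rq Q N) (f ((N - i : ℕ) : Fin N)) * ρ ^ i

lemma coeffOf_root_pow_mul_algebraMap_mul_root_pow {k i : ℕ} (hk : k < N) (hi : i < N)
    (r : ZMod Q) :
    coeffOf hN (ρ ^ k * (algebraMap (ZMod Q) (Rq Q N) r * ρ ^ i)) 0 =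
      r * if k + i = 0 then 1 else if k + i = N then -1 else 0 := by
  rw [mul_left_comm, ← pow_add, ← Algebra.smul_def, ← coeffOfLinearMap_apply, map_smul,
    coeffOfLinearMap_apply, coeffOf_root_pow_zero_of_lt_two_mul hN (by omega), smul_eq_mul]

lemma coeffOf_root_pow_mul_testVector [NeZero N] (f : Fin N → ZMod Q) (k : Fin N) :
    coeffOf hN (ρ ^ (k : ℕ) * testVector f) 0 = f k := by
  have hk := k.isLt
  have hconst : coeffOf hN (ρ ^ (k : ℕ) * algebraMap (ZMod Q) (Rq Q N) (f 0)) 0 =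
      if (k : ℕ) = 0 then f 0 else 0 := by
    have h := coeffOf_root_pow_mul_algebraMap_mul_root_pow hN hk hN (f 0)
    rwa [pow_zero, mul_one, add_zero, if_neg (show (k : ℕ) ≠ N by omega), mul_ite, mul_one,
      mul_zero] at h
  have hterm : ∀ i ∈ Finset.Ico 1 N,
      coeffOf hN
          (ρ ^ (k : ℕ) * (algebraMap (ZMod Q) (Rq Q N) (f ((N - i : ℕ) : Fin N)) * ρ ^ i)) 0 =
        if N - k = i then -f ((N - i : ℕ) : Fin N) else 0 := by
    intro i hi
    obtain ⟨hi1, hi2⟩ := Finset.mem_Ico.1 hi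
    rw [coeffOf_root_pow_mul_algebraMap_mul_root_pow hN hk hi2]
    by_cases hki : N - k = i
    · rw [if_neg (by omega), if_pos (by omega), if_pos hki, mul_neg_one]
    · rw [if_neg (by omega), if_neg (by omega), if_neg hki, mul_zero]
  rw [testVector, mul_sub, Finset.mul_sum, ← coeffOfLinearMap_apply, map_sub, map_sum]
  simp only [coeffOfLinearMap_apply]
  rw [hconst, Finset.sum_congr rfl hterm, Finset.sum_ite_eq]
  by_cases hk0 : (k : ℕ) = 0
  · obtain rfl : k = 0 := by simp [Fin.ext_iff, hk0]
    rw [if_pos hk0, if_neg (by simp), sub_zero]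
  · rw [if_neg hk0, if_pos (Finset.mem_Ico.2 ⟨by omega, by omega⟩), zero_sub, neg_neg,
      Nat.sub_sub_self hk.le, Fin.cast_val_eq_self]

end Negacyclic

theorem aggregated_score_constant_coeff_general (c N Q m : ℕ) (hN : N = 2 ^ c) [NeZero N]
    (f : Fin m → Fin N → ZMod Q) (u : Fin m → Rq Q N)
    (hu : ∀ j, u j = algebraMap (ZMod Q) (Rq Q N) (f j 0) -
      ∑ i ∈ Finset.Ico 1 N,
        algebraMap (ZMod Q) (Rq Q N) (f j ((N - i : ℕ) : Fin N)) *
          (root (X ^ N + 1 : (ZMod Q)[X])) ^ i)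
    (k : Fin m → Fin N) :
    coeffOf (hN ▸ Nat.two_pow_pos c)
        (∑ j, (root (X ^ N + 1 : (ZMod Q)[X])) ^ ((k j : ℕ)) * u j) 0 =
      ∑ j, f j (k j) := by
  rw [← coeffOfLinearMap_apply, map_sum]
  refine Finset.sum_congr rfl fun j _ => ?_
  rw [coeffOfLinearMap_apply, hu j]
  exact coeffOf_root_pow_mul_testVector _ (f j) (k j)

/-- Correctness of the aggregated encrypted score: summing the test-vector evaluations
`X^{k_j} · u_{f_j}` over the `m` scoring functions puts the total score
`Σ_j f_j(k_j)` in the constant coefficient. -/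
theorem aggregated_score_constant_coeff (c N Q m : ℕ) (hN : N = 2 ^ c) (hQ : 0 < Q) [NeZero N]
    (f : Fin m → Fin N → ZMod Q) (u : Fin m → Rq Q N)
    (hu : ∀ j, u j = algebraMap (ZMod Q) (Rq Q N) (f j 0) -
      ∑ i ∈ Finset.Ico 1 N,
        algebraMap (ZMod Q) (Rq Q N) (f j ((N - i : ℕ) : Fin N)) *
          (root (X ^ N + 1 : (ZMod Q)[X])) ^ i)
    (k : Fin m → Fin N) :
    coeffOf (hN ▸ Nat.two_pow_pos c)
        (∑ j, (root (X ^ N + 1 : (ZMod Q)[X])) ^ ((k j : ℕ)) * u j) 0 =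
      ∑ j, f j (k j) :=
  aggregated_score_constant_coeff_general c N Q m hN f u hu k
end
end
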